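/- arXiv:2511.23121 — 2 statements merged into one kernel-verified Lean document; each statement's English description precedes it below -/
import Mathlib

section
/- Let a = (a_n) ∈ ℓ¹(ℕ). If Σ_n a_n x_n = 0 for every x = (x_n) ∈ ℓ²(ℕ) satisfying Σ_n x_n / n = 0, then a = 0. -/
/-! Pairing `a` with `(i + 1) eᵢ - e₀`, which is orthogonal to `(1 / (n + 1))ₙ`, gives
`(i + 1) aᵢ = a₀` for every `i`. So `‖aᵢ‖ = ‖a₀‖ / (i + 1)`, and since the harmonic series diverges,
`a ∈ ℓ¹` forces `a₀ = 0`, hence `a = 0`. -/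

theorem tsum_single_sub_single_mul {α R : Type*} [DecidableEq α] [NonUnitalNonAssocRing R]
    [TopologicalSpace R] [IsTopologicalAddGroup R] [T2Space R] (i j : α) (u v : R) (g : α → R) :
    ∑' n, ((Pi.single i u : α → R) n - (Pi.single j v : α → R) n) * g n = u * g i - v * g j := by
  refine (tsum_congr fun n => ?_).trans
    ((hasSum_pi_single i (u * g i)).sub (hasSum_pi_single j (v * g j))).tsum_eq
  rw [sub_mul, Pi.single_mul_left_apply, Pi.single_mul_left_apply]

theorem eq_zero_of_summable_div_natCast_add_one {c : ℝ}
    (h : Summable fun n : ℕ => c / ((n : ℝ) + 1)) : c = 0 := by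
  by_contra hc
  refine Real.not_summable_one_div_natCast ((summable_nat_add_iff 1).mp ?_)
  simpa [div_eq_mul_inv, summable_mul_left_iff hc] using h

theorem eq_zero_of_summable_norm_of_natCast_add_one_mul_eq {𝕜 : Type*} [RCLike 𝕜] {f : ℕ → 𝕜}
    {c : 𝕜} (hf : Summable fun n => ‖f n‖) (h : ∀ n : ℕ, ((n : 𝕜) + 1) * f n = c) : f = 0 := by
  have hc : ‖c‖ = 0 := eq_zero_of_summable_div_natCast_add_one <| hf.congr fun n => by
    rw [← h n, norm_mul, ← Nat.cast_succ, RCLike.norm_natCast, Nat.cast_succ,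
      mul_div_cancel_left₀ _ (by positivity)]
  ext n
  simpa [norm_eq_zero.mp hc, Nat.cast_add_one_ne_zero] using h n

/-- If `a ∈ ℓ¹(ℕ)` annihilates every `x ∈ ℓ²(ℕ)` with `∑ₙ xₙ/n = 0`
(sequences indexed by `n ≥ 1`, written here as `n+1` for `n : ℕ`), then `a = 0`. -/
theorem stmt5 (a : lp (fun _ : ℕ => ℂ) 1)
    (h : ∀ x : lp (fun _ : ℕ => ℂ) 2,
      (∑' n : ℕ, x n / ((n : ℂ) + 1)) = 0 → (∑' n : ℕ, a n * x n) = 0) :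
    a = 0 := by
  have hrel (i : ℕ) : ((i : ℂ) + 1) * a i = a 0 := by
    let x : lp (fun _ : ℕ => ℂ) 2 := lp.single 2 i ((i : ℂ) + 1) - lp.single 2 0 1
    have hx (g : ℕ → ℂ) : ∑' n, x n * g n = ((i : ℂ) + 1) * g i - g 0 := by
      simpa only [x, lp.coeFn_sub, Pi.sub_apply, lp.single_apply, one_mul] using
        tsum_single_sub_single_mul i 0 ((i : ℂ) + 1) 1 g
    have hperp : ∑' n : ℕ, x n / ((n : ℂ) + 1) = 0 := by
      simp [div_eq_mul_inv, hx, Nat.cast_add_one_ne_zero]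
    have hpair := h x hperp
    simp only [mul_comm (a _), hx] at hpair
    exact sub_eq_zero.mp hpair
  have hsum : Summable fun n => ‖a n‖ := by simpa using (lp.memℓp a).summable (by norm_num)
  exact lp.ext (eq_zero_of_summable_norm_of_natCast_add_one_mul_eq hsum hrel)
end

section
/- Let S and T be closed, densely defined linear operators on a complex Hilbert space H, and let D be a subspace that is a core for both S and T, with ‖Sξ‖ = ‖Tξ‖ for all ξ ∈ D. Then S*S = T*T as unbounded operators (in particular their domains coincide). -/
noncomputable section

open scoped InnerProductSpace

variable {H : Type*} [NormedAddCommGroup H] [InnerProductSpace ℂ H] [CompleteSpace H]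

/-- The graph of the (positive self-adjoint) operator `S*S`, for a densely defined
operator `S`: pairs `(ξ, η)` with `ξ ∈ D(S)`, `Sξ ∈ D(S*)` and `η = S*(Sξ)`. -/
def starCompGraph (S : H →ₗ.[ℂ] H) : Set (H × H) :=
  {p | ∃ h1 : p.1 ∈ S.domain, ∃ h2 : S ⟨p.1, h1⟩ ∈ S.adjoint.domain,
        S.adjoint ⟨S ⟨p.1, h1⟩, h2⟩ = p.2}

set_option linter.unusedSectionVars false

open Filter Topology

namespace Stmt9Aux

/-- `S` restricted to `D` as a genuine linear map. -/
def res (S : H →ₗ.[ℂ] H) {D : Submodule ℂ H} (hDS : D ≤ S.domain) : D →ₗ[ℂ] H :=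
  S.toFun.comp (Submodule.inclusion hDS)

lemma res_apply (S : H →ₗ.[ℂ] H) {D : Submodule ℂ H} (hDS : D ≤ S.domain) (x : D) :
    res S hDS x = S ⟨(x : H), hDS x.2⟩ := rfl

/-- polarization: equal norms on `D` give equal inner products. -/
lemma polar {S T : H →ₗ.[ℂ] H} {D : Submodule ℂ H} (hDS : D ≤ S.domain) (hDT : D ≤ T.domain)
    (hnorm : ∀ z : D, ‖res S hDS z‖ = ‖res T hDT z‖) (x y : D) :
    ⟪res S hDS x, res S hDS y⟫_ℂ = ⟪res T hDT x, res T hDT y⟫_ℂ := by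
  rw [inner_eq_sum_norm_sq_div_four, inner_eq_sum_norm_sq_div_four]
  simp only [← map_add, ← map_sub, ← map_smul, hnorm]

/-- Key approximation lemma. -/
lemma approx {S T : H →ₗ.[ℂ] H}
    (hSclosed : S.IsClosed) (hTclosed : T.IsClosed)
    {D : Submodule ℂ H} (hDS : D ≤ S.domain) (hDT : D ≤ T.domain)
    (hcoreS : (S.domRestrict D).closure = S)
    (hcoreT : (T.domRestrict D).closure = T)
    (hnorm : ∀ z : D, ‖res S hDS z‖ = ‖res T hDT z‖)
    (ξ : H) (hξ : ξ ∈ S.domain) :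
    ∃ hξ' : ξ ∈ T.domain, ∃ u : ℕ → D,
      Tendsto (fun n => ((u n : H))) atTop (𝓝 ξ) ∧
      Tendsto (fun n => res S hDS (u n)) atTop (𝓝 (S ⟨ξ, hξ⟩)) ∧
      Tendsto (fun n => res T hDT (u n)) atTop (𝓝 (T ⟨ξ, hξ'⟩)) := by
  have hclS : (S.domRestrict D).IsClosable :=
    hSclosed.isClosable.leIsClosable LinearPMap.domRestrict_le
  have hclT : (T.domRestrict D).IsClosable :=
    hTclosed.isClosable.leIsClosable LinearPMap.domRestrict_le
  have hgS : S.graph = (S.domRestrict D).graph.topologicalClosure := by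
    conv_lhs => rw [← hcoreS]
    exact hclS.graph_closure_eq_closure_graph.symm
  have hgT : T.graph = (T.domRestrict D).graph.topologicalClosure := by
    conv_lhs => rw [← hcoreT]
    exact hclT.graph_closure_eq_closure_graph.symm
  have hmem : (ξ, S ⟨ξ, hξ⟩) ∈ closure ((S.domRestrict D).graph : Set (H × H)) := by
    have := S.mem_graph ⟨ξ, hξ⟩
    rw [hgS] at this
    exact this
  obtain ⟨w, hw, hwt⟩ := mem_closure_iff_seq_limit.mp hmem
  -- extract the sequence in `D`
  have hww : ∀ n, ∃ hd : (w n).1 ∈ D, (w n).2 = res S hDS ⟨(w n).1, hd⟩ := by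
    intro n
    obtain ⟨y, hy1, hy2⟩ := (S.domRestrict D).mem_graph_iff.mp (hw n)
    have hyD : (y : H) ∈ D := by
      have h : (y : H) ∈ D ⊓ S.domain := y.2
      exact h.1
    refine ⟨hy1 ▸ hyD, ?_⟩
    rw [← hy2, res_apply]
    exact LinearPMap.domRestrict_apply
      (show (y : H) = ((⟨(w n).1, hDS (hy1 ▸ hyD)⟩ : S.domain) : H) from hy1)
  choose hd hval using hww
  set u : ℕ → D := fun n => ⟨(w n).1, hd n⟩ with hu
  have hu1 : Tendsto (fun n => ((u n : H))) atTop (𝓝 ξ) :=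
    (continuous_fst.tendsto _).comp hwt
  have hu2 : Tendsto (fun n => res S hDS (u n)) atTop (𝓝 (S ⟨ξ, hξ⟩)) := by
    have := (continuous_snd.tendsto _).comp hwt
    simpa using this.congr fun n => hval n
  -- `res T` of `u` is Cauchy
  have hC : CauchySeq (fun n => res S hDS (u n)) := hu2.cauchySeq
  have hTC : CauchySeq (fun n => res T hDT (u n)) := by
    rw [Metric.cauchySeq_iff] at hC ⊢
    intro ε hε
    obtain ⟨N, hN⟩ := hC ε hε
    refine ⟨N, fun m hm n hn => ?_⟩
    rw [dist_eq_norm, ← map_sub, ← hnorm, map_sub, ← dist_eq_norm]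
    exact hN m hm n hn
  obtain ⟨y, hy⟩ := cauchySeq_tendsto_of_complete hTC
  -- `(ξ, y)` is in the graph of `T`
  have hyg : (ξ, y) ∈ T.graph := by
    rw [hgT]
    refine mem_closure_of_tendsto (f := fun n => (((u n : H)), res T hDT (u n)))
      (hu1.prodMk_nhds hy) ?_
    filter_upwards with n
    have : ((u n : H), res T hDT (u n)) ∈ (T.domRestrict D).graph := by
      have h1 : (u n : H) ∈ (T.domRestrict D).domain := by
        rw [LinearPMap.domRestrict_domain]
        exact ⟨(u n).2, hDT (u n).2⟩
      have h2 : (T.domRestrict D) ⟨(u n : H), h1⟩ = res T hDT (u n) := by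
        rw [res_apply]
        exact LinearPMap.domRestrict_apply rfl
      have := (T.domRestrict D).mem_graph ⟨(u n : H), h1⟩
      rwa [h2] at this
    exact this
  have hξ' : ξ ∈ T.domain := LinearPMap.mem_domain_of_mem_graph hyg
  have hval' : T ⟨ξ, hξ'⟩ = y :=
    T.mem_graph_snd_inj (T.mem_graph ⟨ξ, hξ'⟩) hyg rfl
  exact ⟨hξ', u, hu1, hu2, hval' ▸ hy⟩

/-- inner products agree on the whole domain. -/
lemma inner_eq {S T : H →ₗ.[ℂ] H}
    (hSclosed : S.IsClosed) (hTclosed : T.IsClosed)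
    {D : Submodule ℂ H} (hDS : D ≤ S.domain) (hDT : D ≤ T.domain)
    (hcoreS : (S.domRestrict D).closure = S)
    (hcoreT : (T.domRestrict D).closure = T)
    (hnorm : ∀ z : D, ‖res S hDS z‖ = ‖res T hDT z‖)
    (ξ x : H) (hξ : ξ ∈ S.domain) (hξ' : ξ ∈ T.domain)
    (hx : x ∈ S.domain) (hx' : x ∈ T.domain) :
    ⟪S ⟨ξ, hξ⟩, S ⟨x, hx⟩⟫_ℂ = ⟪T ⟨ξ, hξ'⟩, T ⟨x, hx'⟩⟫_ℂ := by
  obtain ⟨hξ'', u, hu1, hu2, hu3⟩ :=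
    approx hSclosed hTclosed hDS hDT hcoreS hcoreT hnorm ξ hξ
  obtain ⟨hx'', v, hv1, hv2, hv3⟩ :=
    approx hSclosed hTclosed hDS hDT hcoreS hcoreT hnorm x hx
  have h1 : Tendsto (fun n => ⟪res S hDS (u n), res S hDS (v n)⟫_ℂ) atTop
      (𝓝 ⟪S ⟨ξ, hξ⟩, S ⟨x, hx⟩⟫_ℂ) := hu2.inner hv2
  have h2 : Tendsto (fun n => ⟪res T hDT (u n), res T hDT (v n)⟫_ℂ) atTop
      (𝓝 ⟪T ⟨ξ, hξ'⟩, T ⟨x, hx'⟩⟫_ℂ) := hu3.inner hv3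
  have heq : (fun n => ⟪res S hDS (u n), res S hDS (v n)⟫_ℂ) =
      fun n => ⟪res T hDT (u n), res T hDT (v n)⟫_ℂ := by
    funext n; exact polar hDS hDT hnorm (u n) (v n)
  rw [heq] at h1
  exact tendsto_nhds_unique h1 h2

/-- one inclusion. -/
lemma incl {S T : H →ₗ.[ℂ] H}
    (hSdense : Dense (S.domain : Set H)) (hTdense : Dense (T.domain : Set H))
    (hSclosed : S.IsClosed) (hTclosed : T.IsClosed)
    {D : Submodule ℂ H} (hDS : D ≤ S.domain) (hDT : D ≤ T.domain)
    (hcoreS : (S.domRestrict D).closure = S)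
    (hcoreT : (T.domRestrict D).closure = T)
    (hnorm : ∀ z : D, ‖res S hDS z‖ = ‖res T hDT z‖) :
    starCompGraph S ⊆ starCompGraph T := by
  rintro ⟨ξ, η⟩ ⟨h1, h2, h3⟩
  obtain ⟨h1', -⟩ := approx hSclosed hTclosed hDS hDT hcoreS hcoreT hnorm ξ h1
  have hnorm' : ∀ z : D, ‖res T hDT z‖ = ‖res S hDS z‖ := fun z => (hnorm z).symm
  -- key identity: ∀ x : T.domain, ⟪η, x⟫ = ⟪T ξ, T x⟫
  have key : ∀ x : T.domain, ⟪η, (x : H)⟫_ℂ = ⟪T ⟨ξ, h1'⟩, T x⟫_ℂ := by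
    intro x
    obtain ⟨hx', -⟩ := approx hTclosed hSclosed hDT hDS hcoreT hcoreS hnorm' (x : H) x.2
    have hS : ⟪S.adjoint ⟨S ⟨ξ, h1⟩, h2⟩, ((⟨(x : H), hx'⟩ : S.domain) : H)⟫_ℂ =
        ⟪S ⟨ξ, h1⟩, S ⟨(x : H), hx'⟩⟫_ℂ :=
      (LinearPMap.adjoint_isFormalAdjoint hSdense) ⟨S ⟨ξ, h1⟩, h2⟩ ⟨(x : H), hx'⟩
    rw [h3] at hS
    rw [hS]
    have := inner_eq hSclosed hTclosed hDS hDT hcoreS hcoreT hnorm ξ (x : H) h1 h1' hx' x.2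
    simpa using this
  have h2' : T ⟨ξ, h1'⟩ ∈ T.adjoint.domain :=
    LinearPMap.mem_adjoint_domain_of_exists _ ⟨η, key⟩
  exact ⟨h1', h2', LinearPMap.adjoint_apply_eq hTdense ⟨T ⟨ξ, h1'⟩, h2'⟩ key⟩

end Stmt9Aux

/-- if `S`, `T` are closed densely defined operators admitting a common core
`D` on which `‖Sξ‖ = ‖Tξ‖`, then `S*S = T*T` (equality of graphs; in particular the
domains coincide). -/
theorem stmt9 (S T : H →ₗ.[ℂ] H)
    (hSdense : Dense (S.domain : Set H)) (hTdense : Dense (T.domain : Set H))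
    (hSclosed : S.IsClosed) (hTclosed : T.IsClosed)
    (D : Submodule ℂ H) (hDS : D ≤ S.domain) (hDT : D ≤ T.domain)
    (hcoreS : (S.domRestrict D).closure = S)
    (hcoreT : (T.domRestrict D).closure = T)
    (hnorm : ∀ (ξ : H) (hξ : ξ ∈ D), ‖S ⟨ξ, hDS hξ⟩‖ = ‖T ⟨ξ, hDT hξ⟩‖) :
    starCompGraph S = starCompGraph T := by
  have hn : ∀ z : D, ‖Stmt9Aux.res S hDS z‖ = ‖Stmt9Aux.res T hDT z‖ := fun z =>
    hnorm (z : H) z.2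
  have hn' : ∀ z : D, ‖Stmt9Aux.res T hDT z‖ = ‖Stmt9Aux.res S hDS z‖ := fun z => (hn z).symm
  exact Set.Subset.antisymm
    (Stmt9Aux.incl hSdense hTdense hSclosed hTclosed hDS hDT hcoreS hcoreT hn)
    (Stmt9Aux.incl hTdense hSdense hTclosed hSclosed hDT hDS hcoreT hcoreS hn')
end
end
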